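/- There exist two pairs of logit vectors (z⁽¹⁾, ẑ⁽¹⁾) and (z⁽²⁾, ẑ⁽²⁾) in ℝ² and a reference distribution p such that SQNR(z⁽¹⁾, ẑ⁽¹⁾) < SQNR(z⁽²⁾, ẑ⁽²⁾) while the perplexity of softmax(ẑ⁽¹⁾) under p is strictly less than the perplexity of softmax(ẑ⁽²⁾) under p. -/
import Mathlib


open Finset Real

/-- SQNR order and perplexity order can disagree: there exist logit pairs in ℝ²
and a reference distribution p with SQNR₁ < SQNR₂ but PPL₁ < PPL₂. -/
theorem sqnr_ppl_order_disagree :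
    ∃ (z₁ zq₁ z₂ zq₂ p : Fin 2 → ℝ),
      (∀ i, 0 ≤ p i) ∧ (∑ i, p i = 1) ∧
      10 * Real.logb 10 ((∑ i, (z₁ i) ^ 2) / ∑ i, (z₁ i - zq₁ i) ^ 2) <
        10 * Real.logb 10 ((∑ i, (z₂ i) ^ 2) / ∑ i, (z₂ i - zq₂ i) ^ 2) ∧
      Real.exp (-∑ i, p i *
          Real.log (Real.exp (zq₁ i) / ∑ j, Real.exp (zq₁ j))) <
        Real.exp (-∑ i, p i *
          Real.log (Real.exp (zq₂ i) / ∑ j, Real.exp (zq₂ j))) := by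
  refine ⟨![10, 0], ![9, 0], ![1, 0], ![999/1000, 0], ![1, 0], ?_, ?_, ?_, ?_⟩
  · intro i; fin_cases i <;> norm_num
  · simp [Fin.sum_univ_two]
  · have h1 : ((10:ℝ)^2 + 0^2) / ((10 - 9)^2 + (0 - 0)^2) = 100 := by norm_num
    have h2 : ((1:ℝ)^2 + 0^2) / ((1 - 999/1000)^2 + (0 - 0)^2) = 1000000 := by norm_num
    simp only [Fin.sum_univ_two, Matrix.cons_val_zero, Matrix.cons_val_one, Matrix.head_cons]
    rw [h1, h2]
    have : Real.logb 10 100 < Real.logb 10 1000000 := by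
      apply Real.logb_lt_logb (by norm_num) (by norm_num) (by norm_num)
    linarith
  · simp only [Fin.sum_univ_two, Matrix.cons_val_zero, Matrix.cons_val_one, Matrix.head_cons,
      one_mul, zero_mul, add_zero]
    apply Real.exp_lt_exp.mpr
    apply neg_lt_neg
    apply Real.log_lt_log
    · positivity
    · rw [div_lt_div_iff₀ (by positivity) (by positivity)]
      have h : Real.exp (999/1000) < Real.exp 9 := Real.exp_lt_exp.mpr (by norm_num)
      rw [Real.exp_zero]
      ring_nf
      linarith
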